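/- arXiv:2107.03130 — 4 statements merged into one kernel-verified Lean document; each statement's English description precedes it below -/
import Mathlib

section
/- If f : X → X is a weak contraction on a metric space X with compact image closure, then for all y, z ∈ X, d(f^n(y), f^n(z)) → 0 as n → ∞. -/
/-!
The distances `d(fⁿ y, fⁿ z)` decrease to a limit `L`. If `(p, q)` is a cluster point of the
orbit pair `(fⁿ y, fⁿ z)`, continuity of `f` gives `d(p, q) = L = d(f p, f q)`. A weak
contraction strictly shrinks the distance of distinct points, so `p = q` and `L = 0`.
-/

open Filter Topology

theorem MapClusterPt.eq_of_tendsto {X α : Type*} [TopologicalSpace X] [T2Space X]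
    {F : Filter α} {u : α → X} {x y : X} (hx : MapClusterPt x F u) (hy : Tendsto u F (𝓝 y)) :
    x = y :=
  eq_of_nhds_neBot (hx.clusterPt.mono hy)

def IsWeakContraction {X : Type*} [MetricSpace X] (f : X → X) : Prop :=
  ∀ x y : X, x ≠ y → dist (f x) (f y) < dist x y

namespace IsWeakContraction

variable {X : Type*} [MetricSpace X] {f : X → X}

theorem dist_le (hf : IsWeakContraction f) (x y : X) : dist (f x) (f y) ≤ dist x y := by
  rcases eq_or_ne x y with rfl | hxy
  · simp
  · exact (hf x y hxy).le

theorem lipschitzWith_one (hf : IsWeakContraction f) : LipschitzWith 1 f :=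
  .mk_one hf.dist_le

theorem continuous (hf : IsWeakContraction f) : Continuous f :=
  hf.lipschitzWith_one.continuous

theorem antitone_dist_iterate (hf : IsWeakContraction f) (y z : X) :
    Antitone fun n => dist (f^[n] y) (f^[n] z) :=
  antitone_nat_of_succ_le fun n => by
    simpa only [Function.iterate_succ_apply'] using hf.dist_le _ _

theorem tendsto_dist_iterate_iInf (hf : IsWeakContraction f) (y z : X) :
    Tendsto (fun n => dist (f^[n] y) (f^[n] z)) atTop (𝓝 (⨅ n, dist (f^[n] y) (f^[n] z))) :=
  tendsto_atTop_ciInf (hf.antitone_dist_iterate y z) ⟨0, by rintro _ ⟨n, rfl⟩; exact dist_nonneg⟩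

theorem tendsto_dist_iterate_zero_of_mapClusterPt (hf : IsWeakContraction f) {y z : X}
    {p : X × X} (hp : MapClusterPt p atTop fun n => (f^[n] y, f^[n] z)) :
    Tendsto (fun n => dist (f^[n] y) (f^[n] z)) atTop (𝓝 0) := by
  set L := ⨅ n, dist (f^[n] y) (f^[n] z)
  have hL : Tendsto (fun n => dist (f^[n] y) (f^[n] z)) atTop (𝓝 L) :=
    hf.tendsto_dist_iterate_iInf y z
  have hL_succ : Tendsto (fun n => dist (f (f^[n] y)) (f (f^[n] z))) atTop (𝓝 L) := by
    simpa only [Function.comp_def, Function.iterate_succ_apply'] using hL.comp (tendsto_add_atTop_nat 1)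
  have hdist_p : dist p.1 p.2 = L :=
    (hp.continuousAt_comp continuous_dist.continuousAt).eq_of_tendsto hL
  have hdist_fp : dist (f p.1) (f p.2) = L :=
    ((hp.continuousAt_comp (hf.continuous.prodMap hf.continuous).continuousAt).continuousAt_comp
      continuous_dist.continuousAt).eq_of_tendsto hL_succ
  suffices L = 0 by rwa [this] at hL
  by_contra hL0
  have hne : p.1 ≠ p.2 := fun h => hL0 (by rw [← hdist_p, h, dist_self])
  exact (hf _ _ hne).ne (hdist_fp.trans hdist_p.symm)

end IsWeakContraction

/-- If `f : X → X` is a weak contraction on a compact metric space `X`, then for all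
`y, z ∈ X`, `d(f^[n] y, f^[n] z) → 0` as `n → ∞`. -/
theorem weak_contraction_orbits_approach
    {X : Type*} [MetricSpace X] [CompactSpace X]
    (f : X → X) (hf : ∀ x y : X, x ≠ y → dist (f x) (f y) < dist x y) :
    ∀ y z : X, Tendsto (fun n => dist (f^[n] y) (f^[n] z)) atTop (𝓝 0) := by
  intro y z
  obtain ⟨p, hp⟩ := exists_clusterPt_of_compactSpace (map (fun n => (f^[n] y, f^[n] z)) atTop)
  exact IsWeakContraction.tendsto_dist_iterate_zero_of_mapClusterPt hf hp
end

section
/- Let G(ω, x) = (σω, g_ω(x)) be a skew product over an invertible ergodic measure-preserving system (Σ, ν, σ) with fiber I = [0,1], where each g_ω : I → I is Lipschitz. Suppose there exist λ < 0 and a measurable function C : Σ → ℝ⁺ such that ‖g^n(σ^{-n}ω, ·)‖ ≤ C(ω) e^{λ n} for ν-a.e. ω and all n ≥ 1, where g^n(ω, x) = g_{σ^{n−1}ω}(⋯ g_ω(x)⋯) and ‖·‖ is the Lipschitz seminorm, and suppose sup_ω sup_x |x − g_ω(x)| < ∞. Then for ν-a.e. ω and every x ∈ I, the sequence h_n(ω,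 x) := g^n(σ^{-n}ω, x) is Cauchy. -/
open Set Filter Topology MeasureTheory

/-- Lipschitz seminorm of a map, computed over the unit interval `I = [0,1]`. -/
noncomputable def lipSemi (f : ℝ → ℝ) : ℝ :=
  sSup {r : ℝ | ∃ x ∈ Icc (0:ℝ) 1, ∃ y ∈ Icc (0:ℝ) 1, x ≠ y ∧ r = |f x - f y| / |x - y|}

/-- Fiber compositions `g^n(ω, x) = g_{σ^{n−1}ω}(⋯ g_ω(x)⋯)` of a skew product over
an (abstract) base transformation `σ`. -/
def gIter {S : Type*} (σ : S → S) (g : S → ℝ → ℝ) : ℕ → S → ℝ → ℝ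
  | 0, _, x => x
  | n + 1, ω, x => gIter σ g n (σ ω) (g ω x)

/-!
Pulling back one more step, `h_{n+1}(ω, x) = h_n(ω, g_{σ^{-(n+1)}ω}(x))`, so
`|h_n(ω, x) - h_{n+1}(ω, x)| ≤ ‖h_n(ω, ·)‖ · |x - g_{σ^{-(n+1)}ω}(x)| ≤ C(ω) e^{λn} M`,
where `M` bounds `|x - g_ω(x)|`.
The consecutive distances are thus geometrically small, and the sequence is Cauchy.
-/

lemma lipSemi_nonneg (f : ℝ → ℝ) : 0 ≤ lipSemi f := by
  refine Real.sSup_nonneg ?_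
  rintro r ⟨x, -, y, -, -, rfl⟩
  positivity

lemma LipschitzOnWith.abs_sub_le_lipSemi_mul {f : ℝ → ℝ} {L : NNReal}
    (hf : LipschitzOnWith L f (Icc 0 1)) {x y : ℝ} (hx : x ∈ Icc (0:ℝ) 1)
    (hy : y ∈ Icc (0:ℝ) 1) :
    |f x - f y| ≤ lipSemi f * |x - y| := by
  rcases eq_or_ne x y with rfl | hne
  · simp
  have hxy : 0 < |x - y| := abs_pos.mpr (sub_ne_zero.mpr hne)
  have hbdd : BddAbove {r : ℝ | ∃ x ∈ Icc (0:ℝ) 1, ∃ y ∈ Icc (0:ℝ) 1,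
      x ≠ y ∧ r = |f x - f y| / |x - y|} := by
    refine ⟨L, ?_⟩
    rintro r ⟨a, ha, b, hb, hab, rfl⟩
    rw [div_le_iff₀ (abs_pos.mpr (sub_ne_zero.mpr hab))]
    simpa [Real.dist_eq] using hf.dist_le_mul a ha b hb
  rw [← div_le_iff₀ hxy]
  exact le_csSup hbdd ⟨x, hx, y, hy, hne, rfl⟩

lemma gIter_lipschitzOnWith {S : Type*} (σ : S → S) (g : S → ℝ → ℝ) {s : Set ℝ}
    (hLip : ∀ ω, ∃ L : NNReal, LipschitzOnWith L (g ω) s)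
    (hmaps : ∀ ω, MapsTo (g ω) s s) (n : ℕ) (ω : S) :
    ∃ L : NNReal, LipschitzOnWith L (gIter σ g n ω) s := by
  induction n generalizing ω with
  | zero => exact ⟨1, LipschitzWith.id.lipschitzOnWith⟩
  | succ n ih =>
    obtain ⟨L₁, hL₁⟩ := ih (σ ω)
    obtain ⟨L₂, hL₂⟩ := hLip ω
    exact ⟨L₁ * L₂, hL₁.comp hL₂ (hmaps ω)⟩

lemma gIter_succ_symm_iterate {S : Type*} (σ : S ≃ S) (g : S → ℝ → ℝ) (n : ℕ) (ω : S)
    (x : ℝ) :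
    gIter σ g (n + 1) (σ.symm^[n + 1] ω) x =
      gIter σ g n (σ.symm^[n] ω) (g (σ.symm^[n + 1] ω) x) := by
  rw [gIter, Function.iterate_succ_apply', Equiv.apply_symm_apply]

lemma abs_sub_gIter_succ_symm_iterate_le {S : Type*} (σ : S ≃ S) (g : S → ℝ → ℝ)
    (hLip : ∀ ω, ∃ L : NNReal, LipschitzOnWith L (g ω) (Icc (0:ℝ) 1))
    (hmaps : ∀ ω, MapsTo (g ω) (Icc (0:ℝ) 1) (Icc (0:ℝ) 1))
    {M : ℝ} (hM : ∀ ω, ∀ x ∈ Icc (0:ℝ) 1, |x - g ω x| ≤ M) (n : ℕ) (ω : S)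
    {x : ℝ} (hx : x ∈ Icc (0:ℝ) 1) :
    |gIter σ g n (σ.symm^[n] ω) x - gIter σ g (n + 1) (σ.symm^[n + 1] ω) x| ≤
      lipSemi (gIter σ g n (σ.symm^[n] ω)) * M := by
  obtain ⟨L, hL⟩ := gIter_lipschitzOnWith σ g hLip hmaps n (σ.symm^[n] ω)
  rw [gIter_succ_symm_iterate]
  calc _ ≤ lipSemi (gIter σ g n (σ.symm^[n] ω)) * |x - g (σ.symm^[n + 1] ω) x| :=
        hL.abs_sub_le_lipSemi_mul hx (hmaps _ hx)
    _ ≤ _ := mul_le_mul_of_nonneg_left (hM _ x hx) (lipSemi_nonneg _)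

theorem pullback_iterates_cauchy_general
    {S : Type*} [MeasurableSpace S] (ν : Measure S)
    (σ : S ≃ S)
    (g : S → ℝ → ℝ)
    (hLip : ∀ ω, ∃ L : NNReal, LipschitzOnWith L (g ω) (Icc (0:ℝ) 1))
    (hmaps : ∀ ω, MapsTo (g ω) (Icc (0:ℝ) 1) (Icc (0:ℝ) 1))
    (lam : ℝ) (hlam : lam < 0) (C : S → ℝ)
    (hdecay : ∀ᵐ ω ∂ν, ∀ n : ℕ, 1 ≤ n →
      lipSemi (gIter σ g n (σ.symm^[n] ω)) ≤ C ω * Real.exp (lam * n))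
    (hbdd : ∃ M : ℝ, ∀ ω, ∀ x ∈ Icc (0:ℝ) 1, |x - g ω x| ≤ M) :
    ∀ᵐ ω ∂ν, ∀ x ∈ Icc (0:ℝ) 1,
      CauchySeq (fun n : ℕ => gIter σ g n (σ.symm^[n] ω) x) := by
  obtain ⟨M, hM⟩ := hbdd
  filter_upwards [hdecay] with ω hω x hx
  rw [← cauchySeq_shift 1]
  refine cauchySeq_of_le_geometric (Real.exp lam) (C ω * M * Real.exp lam)
    (Real.exp_lt_one_iff.mpr hlam) fun n => ?_
  have hM0 : 0 ≤ M := (abs_nonneg _).trans (hM ω 0 ⟨le_rfl, zero_le_one⟩)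
  calc dist _ _ ≤ lipSemi (gIter σ g (n + 1) (σ.symm^[n + 1] ω)) * M :=
        abs_sub_gIter_succ_symm_iterate_le σ g hLip hmaps hM (n + 1) ω hx
    _ ≤ C ω * Real.exp (lam * (n + 1 : ℕ)) * M :=
        mul_le_mul_of_nonneg_right (hω (n + 1) n.succ_pos) hM0
    _ = C ω * M * Real.exp lam * Real.exp lam ^ n := by
        rw [← Real.exp_nat_mul, mul_assoc (C ω * M), ← Real.exp_add,
          show lam + n * lam = lam * (n + 1 : ℕ) by push_cast; ring]
        ring

/-- Pullback Cauchy lemma: if the Lipschitz seminorms of the pullback compositions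
decay exponentially, `‖g^n(σ^{-n}ω, ·)‖ ≤ C(ω) e^{λn}` with `λ < 0`, and
`sup_ω sup_x |x − g_ω(x)|` is finite, then for a.e. `ω` and every `x ∈ I` the pullback
sequence `h_n(ω, x) = g^n(σ^{-n}ω, x)` is Cauchy. -/
theorem pullback_iterates_cauchy
    {S : Type*} [MeasurableSpace S] (ν : Measure S) [IsProbabilityMeasure ν]
    (σ : S ≃ S) (hσ : MeasurePreserving σ ν ν) (hσinv : MeasurePreserving σ.symm ν ν)
    (herg : Ergodic σ ν)
    (g : S → ℝ → ℝ)
    (hLip : ∀ ω, ∃ L : NNReal, LipschitzOnWith L (g ω) (Icc (0:ℝ) 1))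
    (hmaps : ∀ ω, MapsTo (g ω) (Icc (0:ℝ) 1) (Icc (0:ℝ) 1))
    (lam : ℝ) (hlam : lam < 0) (C : S → ℝ) (hCmeas : Measurable C) (hCpos : ∀ ω, 0 < C ω)
    (hdecay : ∀ᵐ ω ∂ν, ∀ n : ℕ, 1 ≤ n →
      lipSemi (gIter σ g n (σ.symm^[n] ω)) ≤ C ω * Real.exp (lam * n))
    (hbdd : ∃ M : ℝ, ∀ ω, ∀ x ∈ Icc (0:ℝ) 1, |x - g ω x| ≤ M) :
    ∀ᵐ ω ∂ν, ∀ x ∈ Icc (0:ℝ) 1,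
      CauchySeq (fun n : ℕ => gIter σ g n (σ.symm^[n] ω) x) :=
  pullback_iterates_cauchy_general ν σ g hLip hmaps lam hlam C hdecay hbdd
end

section
/- Under the hypotheses of the pullback Cauchy lemma, the invariant graph γ is attracting: for ν-a.e. ω and every x ∈ I, |g^n(ω, x) − γ(σ^n ω)| → 0 as n → ∞. -/
/-!
Along a.e. orbit the invariance of `γ` propagates, so `g^n(ω, γ ω) = γ(σ^n ω)`. Hence
`|g^n(ω, x) − γ(σ^n ω)| = |g^n(ω, x) − g^n(ω, γ ω)|`, which, as `I` has diameter `1`, is at most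
the Lipschitz seminorm of `g^n(ω, ·)` and therefore at most `C'(ω) e^{λn} → 0`.
-/

open Set Filter Topology MeasureTheory

namespace LipschitzOnWith

variable {f : ℝ → ℝ} {L : NNReal}

lemma bddAbove_slopes (hf : LipschitzOnWith L f (Icc (0:ℝ) 1)) :
    BddAbove {r : ℝ | ∃ x ∈ Icc (0:ℝ) 1, ∃ y ∈ Icc (0:ℝ) 1, x ≠ y ∧ r = |f x - f y| / |x - y|} := by
  refine ⟨L, ?_⟩
  rintro _ ⟨x, hx, y, hy, -, rfl⟩
  have hd := hf.dist_le_mul x hx y hy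
  rw [Real.dist_eq, Real.dist_eq] at hd
  exact div_le_of_le_mul₀ (abs_nonneg _) L.coe_nonneg hd

lemma abs_sub_le_lipSemi_mul_s10 (hf : LipschitzOnWith L f (Icc (0:ℝ) 1)) {x y : ℝ}
    (hx : x ∈ Icc (0:ℝ) 1) (hy : y ∈ Icc (0:ℝ) 1) : |f x - f y| ≤ lipSemi f * |x - y| := by
  rcases eq_or_ne x y with rfl | hxy
  · simp
  rw [← div_le_iff₀ (abs_pos.mpr (sub_ne_zero.mpr hxy))]
  exact le_csSup hf.bddAbove_slopes ⟨x, hx, y, hy, hxy, rfl⟩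

lemma lipSemi_nonneg (hf : LipschitzOnWith L f (Icc (0:ℝ) 1)) : 0 ≤ lipSemi f := by
  have h := hf.abs_sub_le_lipSemi_mul_s10 (x := 0) (y := 1) (by norm_num) (by norm_num)
  norm_num at h
  exact (abs_nonneg _).trans h

lemma abs_sub_le_lipSemi (hf : LipschitzOnWith L f (Icc (0:ℝ) 1)) {x y : ℝ}
    (hx : x ∈ Icc (0:ℝ) 1) (hy : y ∈ Icc (0:ℝ) 1) : |f x - f y| ≤ lipSemi f := by
  have hxy : |x - y| ≤ 1 := by
    simpa only [Real.dist_eq] using Real.dist_le_of_mem_Icc_01 hx hy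
  calc |f x - f y| ≤ lipSemi f * |x - y| := hf.abs_sub_le_lipSemi_mul_s10 hx hy
    _ ≤ lipSemi f * 1 := by gcongr; exact hf.lipSemi_nonneg
    _ = lipSemi f := mul_one _

end LipschitzOnWith

section gIter

variable {S : Type*} (σ : S → S) (g : S → ℝ → ℝ)

lemma exists_lipschitzOnWith_gIter {s : Set ℝ} (hLip : ∀ ω, ∃ L : NNReal, LipschitzOnWith L (g ω) s)
    (hmaps : ∀ ω, MapsTo (g ω) s s) (n : ℕ) (ω : S) :
    ∃ L : NNReal, LipschitzOnWith L (gIter σ g n ω) s := by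
  induction n generalizing ω with
  | zero => exact ⟨1, LipschitzWith.id.lipschitzOnWith⟩
  | succ n ih =>
    obtain ⟨L, hL⟩ := hLip ω
    obtain ⟨M, hM⟩ := ih (σ ω)
    exact ⟨M * L, hM.comp hL (hmaps ω)⟩

lemma gIter_apply_graph {γ : S → ℝ} {ω : S}
    (hinv : ∀ k : ℕ, g (σ^[k] ω) (γ (σ^[k] ω)) = γ (σ^[k + 1] ω)) (n : ℕ) :
    gIter σ g n ω (γ ω) = γ (σ^[n] ω) := by
  induction n generalizing ω with
  | zero => rfl
  | succ n ih =>
    change gIter σ g n (σ ω) (g ω (γ ω)) = _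
    rw [show g ω (γ ω) = γ (σ ω) from hinv 0, ih fun k => hinv (k + 1)]
    rfl

end gIter

lemma tendsto_const_mul_exp_mul_natCast {c lam : ℝ} (hlam : lam < 0) :
    Tendsto (fun n : ℕ => c * Real.exp (lam * n)) atTop (𝓝 0) := by
  have h : Tendsto (fun n : ℕ => lam * (n : ℝ)) atTop atBot :=
    (tendsto_id.const_mul_atTop_of_neg hlam).comp tendsto_natCast_atTop_atTop
  simpa using (Real.tendsto_exp_atBot.comp h).const_mul c

theorem invariant_graph_attracting_general
    {S : Type*} [MeasurableSpace S] (ν : Measure S)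
    (σ : S ≃ S) (hσ : MeasurePreserving σ ν ν)
    (g : S → ℝ → ℝ)
    (hLip : ∀ ω, ∃ L : NNReal, LipschitzOnWith L (g ω) (Icc (0:ℝ) 1))
    (hmaps : ∀ ω, MapsTo (g ω) (Icc (0:ℝ) 1) (Icc (0:ℝ) 1))
    (lam : ℝ) (hlam : lam < 0) (C' : S → ℝ)
    (hdecay : ∀ᵐ ω ∂ν, ∀ n : ℕ, 1 ≤ n →
      lipSemi (gIter σ g n ω) ≤ C' ω * Real.exp (lam * n))
    (γ : S → ℝ) (hγI : ∀ᵐ ω ∂ν, γ ω ∈ Icc (0:ℝ) 1)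
    (hinv : ∀ᵐ ω ∂ν, g ω (γ ω) = γ (σ ω)) :
    ∀ᵐ ω ∂ν, ∀ x ∈ Icc (0:ℝ) 1,
      Tendsto (fun n : ℕ => |gIter σ g n ω x - γ ((⇑σ)^[n] ω)|) atTop (𝓝 0) := by
  have horbit : ∀ᵐ ω ∂ν, ∀ k : ℕ, g ((⇑σ)^[k] ω) (γ ((⇑σ)^[k] ω)) = γ ((⇑σ)^[k + 1] ω) := by
    refine ae_all_iff.2 fun k => ?_
    filter_upwards [(hσ.iterate k).quasiMeasurePreserving.ae hinv] with ω h
    rw [h, Function.iterate_succ_apply']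
  filter_upwards [hdecay, hγI, horbit] with ω hdec hγω horb x hx
  refine squeeze_zero' (Eventually.of_forall fun n => abs_nonneg _) ?_
    (tendsto_const_mul_exp_mul_natCast (c := C' ω) hlam)
  filter_upwards [eventually_ge_atTop 1] with n hn
  obtain ⟨L, hL⟩ := exists_lipschitzOnWith_gIter σ g hLip hmaps n ω
  calc |gIter σ g n ω x - γ ((⇑σ)^[n] ω)|
      = |gIter σ g n ω x - gIter σ g n ω (γ ω)| := by rw [gIter_apply_graph σ g horb]
    _ ≤ lipSemi (gIter σ g n ω) := hL.abs_sub_le_lipSemi hx hγω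
    _ ≤ C' ω * Real.exp (lam * n) := hdec n hn

/-- The invariant graph `γ` is attracting: under exponential decay of the fiber
Lipschitz seminorms, for a.e. `ω` and every `x ∈ I`,
`|g^n(ω, x) − γ(σ^n ω)| → 0` as `n → ∞`. -/
theorem invariant_graph_attracting
    {S : Type*} [MeasurableSpace S] (ν : Measure S) [IsProbabilityMeasure ν]
    (σ : S ≃ S) (hσ : MeasurePreserving σ ν ν) (hσinv : MeasurePreserving σ.symm ν ν)
    (herg : Ergodic σ ν)
    (g : S → ℝ → ℝ)
    (hLip : ∀ ω, ∃ L : NNReal, LipschitzOnWith L (g ω) (Icc (0:ℝ) 1))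
    (hmaps : ∀ ω, MapsTo (g ω) (Icc (0:ℝ) 1) (Icc (0:ℝ) 1))
    (lam : ℝ) (hlam : lam < 0) (C' : S → ℝ)
    (hdecay : ∀ᵐ ω ∂ν, ∀ n : ℕ, 1 ≤ n →
      lipSemi (gIter σ g n ω) ≤ C' ω * Real.exp (lam * n))
    (γ : S → ℝ) (hγmeas : Measurable γ) (hγI : ∀ᵐ ω ∂ν, γ ω ∈ Icc (0:ℝ) 1)
    (hinv : ∀ᵐ ω ∂ν, g ω (γ ω) = γ (σ ω)) :
    ∀ᵐ ω ∂ν, ∀ x ∈ Icc (0:ℝ) 1,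
      Tendsto (fun n : ℕ => |gIter σ g n ω x - γ ((⇑σ)^[n] ω)|) atTop (𝓝 0) :=
  invariant_graph_attracting_general ν σ hσ g hLip hmaps lam hlam C' hdecay γ hγI hinv
end

section
/- Let f₀, f₁ : I → I be continuous maps and B ⊆ I an open interval with closure(B) ⊆ f₀(B) ∪ f₁(B) (covering property). Then for every x ∈ closure(B) there exists a sequence (ω_{−n})_{n≥1} ∈ {0,1}^ℕ such that x ∈ f_{ω_{−1}} ∘ ⋯ ∘ f_{ω_{−n}}(closure(B)) for all n ≥ 1. -/
open Set

/-- `comps f ω B n = f_{ω 1} ∘ ⋯ ∘ f_{ω n} (B)`, the image of `B` under the first `n`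
maps labelled by the sequence `ω` (with `ω m` standing for `ω_{−m}`). -/
def comps (f : Fin 2 → ℝ → ℝ) : (ℕ → Fin 2) → Set ℝ → ℕ → Set ℝ
  | _, B, 0 => B
  | ω, B, n + 1 => f (ω 1) '' comps f (fun m => ω (m + 1)) B n

/-!
Since every point of `closure B` has a preimage in `B` under `f₀` or `f₁`, one can walk
backwards from `x` forever, staying in `closure B`; the labels of the maps used along this
backward orbit form the required sequence.
-/

theorem exists_backward_orbit {α ι : Type*} (f : ι → α → α) {C : Set α}
    (hC : C ⊆ ⋃ i, f i '' C) {x : α} (hx : x ∈ C) :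
    ∃ (ω : ℕ → ι) (p : ℕ → α),
      p 0 = x ∧ (∀ k, p k ∈ C) ∧ ∀ k, f (ω (k + 1)) (p (k + 1)) = p k := by
  have hpre : ∀ z : C, ∃ i, ∃ y : C, f i y = z := by
    rintro ⟨z, hz⟩
    obtain ⟨i, y, hy, hyz⟩ := mem_iUnion.1 (hC hz)
    exact ⟨i, ⟨y, hy⟩, hyz⟩
  choose i pre hpre using hpre
  let p : ℕ → C := fun k => pre^[k] ⟨x, hx⟩
  refine ⟨fun k => i (p (k - 1)), fun k => p k, rfl, fun k => (p k).2, fun k => ?_⟩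
  simp only [p, Nat.add_sub_cancel, Function.iterate_succ_apply']
  exact hpre _

theorem mem_comps_of_backward_orbit {f : Fin 2 → ℝ → ℝ} {C : Set ℝ} {ω : ℕ → Fin 2}
    {p : ℕ → ℝ} (hpC : ∀ k, p k ∈ C) (hstep : ∀ k, f (ω (k + 1)) (p (k + 1)) = p k)
    (n : ℕ) : p 0 ∈ comps f ω C n := by
  induction n generalizing ω p with
  | zero => exact hpC 0
  | succ n ih =>
    exact ⟨p 1, ih (fun k => hpC (k + 1)) (fun k => hstep (k + 1)), hstep 0⟩

theorem covering_property_gives_symbolic_sequence_general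
    (f : Fin 2 → ℝ → ℝ)
    (a b : ℝ)
    (hcov : closure (Ioo a b) ⊆ f 0 '' Ioo a b ∪ f 1 '' Ioo a b) :
    ∀ x ∈ closure (Ioo a b), ∃ ω : ℕ → Fin 2,
      ∀ n : ℕ, 1 ≤ n → x ∈ comps f ω (closure (Ioo a b)) n := by
  intro x hx
  have hC : closure (Ioo a b) ⊆ ⋃ i, f i '' closure (Ioo a b) := fun z hz => by
    rcases hcov hz with h | h
    exacts [mem_iUnion.2 ⟨0, image_mono subset_closure h⟩,
      mem_iUnion.2 ⟨1, image_mono subset_closure h⟩]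
  obtain ⟨ω, p, rfl, hpC, hstep⟩ := exists_backward_orbit f hC hx
  exact ⟨ω, fun n _ => mem_comps_of_backward_orbit hpC hstep n⟩

/-- Covering property: if `f₀, f₁ : I → I` are continuous and `B ⊆ I` is an open
interval with `closure B ⊆ f₀(B) ∪ f₁(B)`, then every `x ∈ closure B` admits a
sequence `(ω_{−n})` of zeros and ones with
`x ∈ f_{ω_{−1}} ∘ ⋯ ∘ f_{ω_{−n}}(closure B)` for all `n ≥ 1`. -/
theorem covering_property_gives_symbolic_sequence
    (f : Fin 2 → ℝ → ℝ) (hcont : ∀ i, Continuous (f i))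
    (hmaps : ∀ i, MapsTo (f i) (Icc (0:ℝ) 1) (Icc (0:ℝ) 1))
    (a b : ℝ) (hab : a < b) (hBI : Ioo a b ⊆ Icc (0:ℝ) 1)
    (hcov : closure (Ioo a b) ⊆ f 0 '' Ioo a b ∪ f 1 '' Ioo a b) :
    ∀ x ∈ closure (Ioo a b), ∃ ω : ℕ → Fin 2,
      ∀ n : ℕ, 1 ≤ n → x ∈ comps f ω (closure (Ioo a b)) n :=
  covering_property_gives_symbolic_sequence_general f a b hcov
end
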